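/- For every i∈I and every homogeneous x∈'𝔣, one has ᵢ𝒮(ι⁻(x)) = ξ(|x|, i)·ι⁻(r_i(x)) in '𝔣⁻, and 𝒮_i(ι⁺(x)) = ι⁺(ᵢr(x)) in '𝔣⁺. -/

import Mathlib

open scoped TensorProduct

noncomputable section

/-- A Cartan datum on `I`. -/
structure CartanDatum (I : Type) where
  c : I → I → ℤ
  symm : ∀ i j, c i j = c j i
  pos : ∀ i, 0 < c i i
  even : ∀ i, Even (c i i)
  dvd : ∀ i j, i ≠ j → c i i ∣ 2 * c i j
  nonpos : ∀ i j, i ≠ j → 2 * c i j ≤ 0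

namespace CartanDatum

variable {I : Type} (cd : CartanDatum I)

/-- `d i = (i·i)/2`. -/
def d (i : I) : ℤ := cd.c i i / 2

/-- `a i j = 2(i·j)/(i·i)`. -/
def a (i j : I) : ℤ := 2 * cd.c i j / cd.c i i

/-- Extension of the pairing to `ℕ[I] × ℕ[I]`. -/
def dotN (ν μ : I →₀ ℕ) : ℤ :=
  ν.sum fun i m => μ.sum fun j n => (m : ℤ) * (n : ℤ) * cd.c i j

end CartanDatum

/-- A multiplicative bilinear form `ℕ[I] × ℕ[I] → 𝔽`. -/
structure MultForm (I 𝔽 : Type) [Field 𝔽] where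
  f : (I →₀ ℕ) → (I →₀ ℕ) → 𝔽
  add_left : ∀ ν ν' μ, f (ν + ν') μ = f ν μ * f ν' μ
  add_right : ∀ μ ν ν', f μ (ν + ν') = f μ ν * f μ ν'
  ne_zero : ∀ ν μ, f ν μ ≠ 0

/-- The trivial multiplicative bilinear form, constantly `1`. -/
def trivMF (I 𝔽 : Type) [Field 𝔽] : MultForm I 𝔽 :=
  ⟨fun _ _ => 1, fun _ _ _ => by ring, fun _ _ _ => by ring, fun _ _ => one_ne_zero⟩

variable {I : Type}

/-- The generator `i` of `ℕ[I]`. -/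
def δN (i : I) : I →₀ ℕ := Finsupp.single i 1

/-- The model for the free algebra `'𝔣` on the `θ i`. -/
abbrev FA (𝔽 I : Type) [Field 𝔽] := MonoidAlgebra 𝔽 (FreeMonoid I)

/-- The generator `θ i` of `'𝔣`. -/
def θ (𝔽 : Type) [Field 𝔽] {I : Type} (i : I) : FA 𝔽 I :=
  MonoidAlgebra.of 𝔽 (FreeMonoid I) (FreeMonoid.of i)

/-- The `ℕ[I]`-degree of a word. -/
def wt [DecidableEq I] (w : FreeMonoid I) : I →₀ ℕ :=
  Multiset.toFinsupp (↑(FreeMonoid.toList w))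

/-- Homogeneity of degree `ν` in `'𝔣`. -/
def IsHomog {𝔽 : Type} [Field 𝔽] [DecidableEq I] (ν : I →₀ ℕ) (x : FA 𝔽 I) : Prop :=
  ∀ w ∈ Finsupp.support (x.coeff : FreeMonoid I →₀ 𝔽), wt w = ν

/-- The model for `'𝔣 ⊗ '𝔣` (basis: pairs of words). -/
abbrev TA (𝔽 I : Type) [Field 𝔽] := MonoidAlgebra 𝔽 (FreeMonoid I × FreeMonoid I)

/-- The tensor `x ⊗ y` in the model of `'𝔣 ⊗ '𝔣`. -/
def tmul {𝔽 : Type} [Field 𝔽] (x y : FA 𝔽 I) : TA 𝔽 I :=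
  Finsupp.sum (x.coeff : FreeMonoid I →₀ 𝔽) fun w a =>
    Finsupp.sum (y.coeff : FreeMonoid I →₀ 𝔽) fun u b =>
      MonoidAlgebra.ofCoeff (Finsupp.single (w, u) (a * b) : (FreeMonoid I × FreeMonoid I) →₀ 𝔽)

/-- The twisted multiplication on `'𝔣 ⊗ '𝔣`:
`(x₁⊗x₂)(y₁⊗y₂) = v^{-|y₁|·|x₂|} β(|x₂|,|y₁|) x₁y₁ ⊗ x₂y₂`. -/
def tMul [DecidableEq I] {𝔽 : Type} [Field 𝔽] (cd : CartanDatum I) (v : 𝔽)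
    (β : MultForm I 𝔽) (z z' : TA 𝔽 I) : TA 𝔽 I :=
  Finsupp.sum (z.coeff : (FreeMonoid I × FreeMonoid I) →₀ 𝔽) fun p a =>
    Finsupp.sum (z'.coeff : (FreeMonoid I × FreeMonoid I) →₀ 𝔽) fun q b =>
      MonoidAlgebra.ofCoeff (Finsupp.single (p.1 * q.1, p.2 * q.2)
        (a * b * v ^ (-(cd.dotN (wt q.1) (wt p.2))) * β.f (wt p.2) (wt q.1))
        : (FreeMonoid I × FreeMonoid I) →₀ 𝔽)

/-- The bilinear form on `'𝔣 ⊗ '𝔣` induced by a form `B` on `'𝔣`: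
`(x₁⊗x₂, y₁⊗y₂) = α(|x₁|,|x₂|) (x₁,y₁) (x₂,y₂)` for homogeneous `x₁, x₂`. -/
def pairT [DecidableEq I] {𝔽 : Type} [Field 𝔽] (α : MultForm I 𝔽)
    (B : FA 𝔽 I →ₗ[𝔽] FA 𝔽 I →ₗ[𝔽] 𝔽) (z z' : TA 𝔽 I) : 𝔽 :=
  Finsupp.sum (z.coeff : (FreeMonoid I × FreeMonoid I) →₀ 𝔽) fun p a =>
    Finsupp.sum (z'.coeff : (FreeMonoid I × FreeMonoid I) →₀ 𝔽) fun q b =>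
      a * b * α.f (wt p.1) (wt p.2)
        * B (MonoidAlgebra.single p.1 1) (MonoidAlgebra.single q.1 1)
        * B (MonoidAlgebra.single p.2 1) (MonoidAlgebra.single q.2 1)

/-- The quantum integer `[n]_c`. -/
def qnum {𝔽 : Type} [Field 𝔽] (c : 𝔽) (n : ℕ) : 𝔽 :=
  (c ^ (n : ℤ) - c ^ (-(n : ℤ))) / (c - c⁻¹)

/-- The quantum factorial `[n]_c!`. -/
def qfact {𝔽 : Type} [Field 𝔽] (c : 𝔽) (n : ℕ) : 𝔽 :=
  ∏ k ∈ Finset.range n, qnum c (k + 1)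

/-- The divided power `θ_i^{(n)} = θ_i^n / [n]_{v_i}!`. -/
def θdiv [DecidableEq I] {𝔽 : Type} [Field 𝔽] (cd : CartanDatum I) (v : 𝔽)
    (i : I) (n : ℕ) : FA 𝔽 I :=
  (qfact (v ^ cd.d i) n)⁻¹ • (θ 𝔽 i) ^ n

/-- The twisted quantum Serre element
`D_{ij} = Σ_{k+k'=1-a_{ij}} (-1)^k β(i,j)^{-k} θ_i^{(k)} θ_j θ_i^{(k')}`. -/
def Dij [DecidableEq I] {𝔽 : Type} [Field 𝔽] (cd : CartanDatum I) (v : 𝔽)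
    (g : I → I → 𝔽) (i j : I) : FA 𝔽 I :=
  ∑ k ∈ Finset.range ((1 - cd.a i j).toNat + 1),
    ((-1 : 𝔽) ^ k * ((g i j)⁻¹) ^ k) •
      (θdiv cd v i k * θ 𝔽 j * θdiv cd v i ((1 - cd.a i j).toNat - k))

end
noncomputable section

variable {I : Type}

/-- The generator `i` of `ℤ[I]`. -/
def δZ (i : I) : I →₀ ℤ := Finsupp.single i 1

/-- The inclusion `ℕ[I] → ℤ[I]`. -/
def nz (ν : I →₀ ℕ) : I →₀ ℤ := Finsupp.mapRange (fun n : ℕ => (n : ℤ)) rfl ν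

/-- The multiplicative extension to `ℤ[I] × ℤ[I]` of generator values `g : I → I → 𝔽`. -/
def extZ {𝔽 : Type} [Field 𝔽] (g : I → I → 𝔽) (ν μ : I →₀ ℤ) : 𝔽 :=
  ν.prod fun i m => μ.prod fun j n => g i j ^ (m * n)

/-- The form `⟨i,j⟩ = v^{-i·j} β(i,j) ξ(j,i)`, extended multiplicatively to `ℤ[I]`. -/
def ang {𝔽 : Type} [Field 𝔽] (cd : CartanDatum I) (v : 𝔽) (βg ξg : I → I → 𝔽) :
    (I →₀ ℤ) → (I →₀ ℤ) → 𝔽 :=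
  extZ fun i j => v ^ (-(cd.c i j)) * βg i j * ξg j i

/-- The monomial in `F : I → A` associated with a word `w`. -/
def wordProd {A : Type} [Monoid A] (F : I → A) (w : FreeMonoid I) : A :=
  ((FreeMonoid.toList w).map F).prod

/-- `x` is homogeneous of degree `μ` in the subalgebra generated by the image of `F`. -/
def HomogIn (𝔽 : Type) [Field 𝔽] [DecidableEq I] {A : Type} [Ring A] [Algebra 𝔽 A]
    (F : I → A) (μ : I →₀ ℕ) (x : A) : Prop :=
  x ∈ Submodule.span 𝔽 {z | ∃ w, wt w = μ ∧ z = wordProd F w}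

end

/-!
Both sides of each identity are `𝔽`-linear in `x`, so it suffices to treat the monomials
`θ_w`, by induction on the word `w = a w'`. Since `ι⁻` reverses products, `ι⁻(θ_a θ_{w'}) = ι⁻(θ_{w'}) F_a`,
and the Leibniz rule of `ᵢ𝒮` for this product is the rule of `r_i` for `θ_a θ_{w'}` multiplied by
`ξ(a + |w'|, i) = ξ(a, i) ξ(|w'|, i)`: the factor `ξ(a, i)` comes from `𝒥_i(F_a)`, and the twist
`⟨i, |w'|⟩ = v^{-i·|w'|} β(i, |w'|) ξ(|w'|, i)` of `𝒦_i` is the twist of `r_i` times `ξ(|w'|, i)`.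
On the positive side `ι⁺` is multiplicative and `𝒦'_i(E_a) = v^{-a·i} β(a, i) E_a` is exactly the
twist in the rule of `ᵢr`.
-/

section Words

variable {I : Type} {𝔽 : Type} [Field 𝔽]

theorem wordProd_eq_lift {A : Type} [Monoid A] (F : I → A) : wordProd F = FreeMonoid.lift F :=
  funext fun w => (FreeMonoid.lift_apply F w).symm

theorem wordProd_mul {A : Type} [Monoid A] (F : I → A) (w u : FreeMonoid I) :
    wordProd F (w * u) = wordProd F w * wordProd F u := by
  rw [wordProd_eq_lift, map_mul]

theorem wordProd_of {A : Type} [Monoid A] (F : I → A) (a : I) :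
    wordProd F (FreeMonoid.of a) = F a := by
  rw [wordProd_eq_lift, FreeMonoid.lift_eval_of]

theorem θ_eq_single (a : I) : θ 𝔽 a = MonoidAlgebra.single (FreeMonoid.of a) 1 :=
  MonoidAlgebra.of_apply _ _ _

theorem single_of_mul (a : I) (w : FreeMonoid I) :
    MonoidAlgebra.single (FreeMonoid.of a * w) (1 : 𝔽) = θ 𝔽 a * MonoidAlgebra.single w 1 := by
  rw [θ_eq_single, MonoidAlgebra.single_mul_single, one_mul]

theorem AlgHom.map_single_eq_wordProd {A : Type} [Semiring A] [Algebra 𝔽 A]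
    (φ : FA 𝔽 I →ₐ[𝔽] A) (E : I → A) (hφ : ∀ i, φ (θ 𝔽 i) = E i) (w : FreeMonoid I) :
    φ (MonoidAlgebra.single w 1) = wordProd E w := by
  induction w using FreeMonoid.recOn with
  | one => exact (map_one φ).trans (map_one (FreeMonoid.lift E)).symm
  | of_mul a t ih => rw [single_of_mul, map_mul, hφ, ih, wordProd_mul, wordProd_of]

theorem map_single_eq_wordProd_reverse {A : Type} [Semiring A] [Module 𝔽 A]
    (ι : FA 𝔽 I →ₗ[𝔽] A) (F : I → A) (h1 : ι 1 = 1) (hanti : ∀ x y, ι (x * y) = ι y * ι x)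
    (hθ : ∀ i, ι (θ 𝔽 i) = F i) (w : FreeMonoid I) :
    ι (MonoidAlgebra.single w 1) = wordProd F w.reverse := by
  induction w using FreeMonoid.recOn with
  | one => exact h1.trans (map_one (FreeMonoid.lift F)).symm
  | of_mul a t ih =>
    rw [single_of_mul, hanti, hθ, ih, FreeMonoid.reverse_mul, FreeMonoid.reverse_of,
      wordProd_mul, wordProd_of]

variable [DecidableEq I]

theorem wt_mul (w u : FreeMonoid I) : wt (w * u) = wt w + wt u := by
  rw [wt, wt, wt, FreeMonoid.toList_mul, ← Multiset.coe_add, map_add]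

theorem wt_of (a : I) : wt (FreeMonoid.of a) = δN a := by
  simp [wt, δN, FreeMonoid.toList_of]

theorem wt_reverse (w : FreeMonoid I) : wt w.reverse = wt w := by
  change Multiset.toFinsupp ((FreeMonoid.toList w).reverse : Multiset I) = _
  rw [Multiset.coe_reverse]
  rfl

theorem isHomog_single (w : FreeMonoid I) : IsHomog (wt w) (MonoidAlgebra.single w (1 : 𝔽)) :=
  fun _ hu => by rw [Finset.mem_singleton.1 (Finsupp.support_single_subset hu)]

theorem isHomog_θ (a : I) : IsHomog (δN a) (θ 𝔽 a) := by
  rw [θ_eq_single, ← wt_of]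
  exact isHomog_single _

theorem IsHomog.linearMap_ext {M : Type} [AddCommMonoid M] [Module 𝔽 M] {ν : I →₀ ℕ}
    {x : FA 𝔽 I} (hx : IsHomog ν x) (f g : FA 𝔽 I →ₗ[𝔽] M)
    (h : ∀ w, wt w = ν → f (MonoidAlgebra.single w 1) = g (MonoidAlgebra.single w 1)) :
    f x = g x := by
  rw [← x.sum_coeff_single, Finsupp.sum, map_sum, map_sum]
  refine Finset.sum_congr rfl fun w hw => ?_
  rw [← mul_one (x.coeff w), ← smul_eq_mul, ← MonoidAlgebra.smul_single, map_smul, map_smul,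
    h w (hx w hw)]

end Words

section Forms

variable {I : Type} {𝔽 : Type} [Field 𝔽]

theorem extZ_zero_left (g : I → I → 𝔽) (μ : I →₀ ℤ) : extZ g 0 μ = 1 :=
  Finsupp.prod_zero_index

theorem extZ_zero_right (g : I → I → 𝔽) (ν : I →₀ ℤ) : extZ g ν 0 = 1 :=
  Finset.prod_eq_one fun _ _ => Finsupp.prod_zero_index

theorem extZ_single_left (g : I → I → 𝔽) (i : I) (μ : I →₀ ℤ) :
    extZ g (δZ i) μ = μ.prod fun j n => g i j ^ n := by
  rw [extZ, δZ, Finsupp.prod_single_index (by simp [Finsupp.prod])]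
  simp

theorem extZ_single_right (g : I → I → 𝔽) (ν : I →₀ ℤ) (j : I) :
    extZ g ν (δZ j) = ν.prod fun i m => g i j ^ m := by
  refine Finsupp.prod_congr fun i _ => ?_
  rw [δZ, Finsupp.prod_single_index (by simp), mul_one]

theorem extZ_single_single (g : I → I → 𝔽) (i j : I) : extZ g (δZ i) (δZ j) = g i j := by
  rw [extZ_single_left, δZ, Finsupp.prod_single_index (by simp), zpow_one]

theorem extZ_mul (f g : I → I → 𝔽) (ν μ : I →₀ ℤ) :
    extZ (fun i j => f i j * g i j) ν μ = extZ f ν μ * extZ g ν μ := by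
  simp only [extZ, mul_zpow, Finsupp.prod_mul]

theorem extZ_add_left {g : I → I → 𝔽} (hg : ∀ i j, g i j ≠ 0) (ν ν' μ : I →₀ ℤ) :
    extZ g (ν + ν') μ = extZ g ν μ * extZ g ν' μ := by
  refine Finsupp.prod_add_index' (fun _ => by simp [Finsupp.prod]) fun i m m' => ?_
  simp only [add_mul, zpow_add₀ (hg i _), Finsupp.prod_mul]

theorem nz_add (ν μ : I →₀ ℕ) : nz (ν + μ) = nz ν + nz μ :=
  Finsupp.mapRange_add (by simp) ν μ

theorem nz_δN (i : I) : nz (δN i) = δZ i := by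
  rw [nz, δN, Finsupp.mapRange_single, Nat.cast_one, δZ]

theorem CartanDatum.dotN_δN_left (cd : CartanDatum I) (i : I) (μ : I →₀ ℕ) :
    cd.dotN (δN i) μ = μ.sum fun j n => (n : ℤ) * cd.c i j := by
  rw [CartanDatum.dotN, δN, Finsupp.sum_single_index (by simp)]
  simp

theorem CartanDatum.dotN_δN_δN (cd : CartanDatum I) (i j : I) :
    cd.dotN (δN i) (δN j) = cd.c i j := by
  rw [cd.dotN_δN_left, δN, Finsupp.sum_single_index (by simp), Nat.cast_one, one_mul]

theorem zpow_finset_sum₀ {v : 𝔽} (hv : v ≠ 0) {J : Type} (s : Finset J) (f : J → ℤ) :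
    v ^ (∑ j ∈ s, f j) = ∏ j ∈ s, v ^ f j := by
  classical
  induction s using Finset.induction with
  | empty => simp
  | insert _ _ h ih => rw [Finset.sum_insert h, Finset.prod_insert h, zpow_add₀ hv, ih]

theorem extZ_zpow_neg_c {v : 𝔽} (hv : v ≠ 0) (cd : CartanDatum I) (i : I) (μ : I →₀ ℕ) :
    extZ (fun p q => v ^ (-cd.c p q)) (δZ i) (nz μ) = v ^ (-cd.dotN (δN i) μ) := by
  rw [extZ_single_left, cd.dotN_δN_left, nz, Finsupp.prod_mapRange_index (by simp),
    Finsupp.sum, Finsupp.prod, ← Finset.sum_neg_distrib, zpow_finset_sum₀ hv]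
  refine Finset.prod_congr rfl fun j _ => ?_
  rw [← zpow_mul, neg_mul, mul_comm]

theorem ang_δZ_nz {v : 𝔽} (hv : v ≠ 0) (cd : CartanDatum I) (βg ξg : I → I → 𝔽)
    (i : I) (μ : I →₀ ℕ) :
    ang cd v βg ξg (δZ i) (nz μ)
      = v ^ (-cd.dotN (δN i) μ) * extZ βg (δZ i) (nz μ) * extZ ξg (nz μ) (δZ i) := by
  rw [ang, extZ_mul (fun p q => v ^ (-cd.c p q) * βg p q) (fun p q => ξg q p), extZ_mul,
    extZ_zpow_neg_c hv, extZ_single_left (fun p q => ξg q p), extZ_single_right]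

theorem ang_zero_left (cd : CartanDatum I) (v : 𝔽) (βg ξg : I → I → 𝔽) (μ : I →₀ ℤ) :
    ang cd v βg ξg 0 μ = 1 :=
  extZ_zero_left _ μ

theorem ang_zero_right (cd : CartanDatum I) (v : 𝔽) (βg ξg : I → I → 𝔽) (ν : I →₀ ℤ) :
    ang cd v βg ξg ν 0 = 1 :=
  extZ_zero_right _ ν

theorem ang_δZ_δZ (cd : CartanDatum I) (v : 𝔽) (βg ξg : I → I → 𝔽) (i j : I) :
    ang cd v βg ξg (δZ i) (δZ j) = v ^ (-cd.c i j) * βg i j * ξg j i :=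
  extZ_single_single _ i j

end Forms

theorem apply_wordProd_of_apply_KwJ {I 𝔽 A : Type} [Monoid A] [SMul 𝔽 A] {E : I → A}
    {K J : (I →₀ ℤ) → A} (hK0 : K 0 = 1) (hJ0 : J 0 = 1) {f : A → A}
    {s : (I →₀ ℤ) → (I →₀ ℤ) → FreeMonoid I → 𝔽}
    (h : ∀ τ₁ τ₂ w, f (K τ₁ * wordProd E w * J τ₂) = s τ₁ τ₂ w • (K τ₁ * wordProd E w * J τ₂))
    (w : FreeMonoid I) : f (wordProd E w) = s 0 0 w • wordProd E w := by
  simpa only [hK0, hJ0, one_mul, mul_one] using h 0 0 w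

section Intertwining

variable {I : Type} [DecidableEq I] {𝔽 : Type} [Field 𝔽] {A : Type} [Ring A] [Algebra 𝔽 A]

theorem iS_ιm_single_eq_smul_ιm_ri {cd : CartanDatum I} {v : 𝔽} (hv : v ≠ 0)
    {βg ξg : I → I → 𝔽} (hξne : ∀ i j, ξg i j ≠ 0)
    {F : I → A} {K' J' : (I →₀ ℤ) → A} (hK'0 : K' 0 = 1) (hJ'0 : J' 0 = 1)
    {cK cJ : (I →₀ ℤ) → (A →ₗ[𝔽] A)}
    (hcK : ∀ (ν τ₁ τ₂ : I →₀ ℤ) (w : FreeMonoid I),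
      cK ν (K' τ₁ * wordProd F w * J' τ₂)
        = (ang cd v βg ξg ν τ₁ * ang cd v βg ξg ν (nz (wt w))) • (K' τ₁ * wordProd F w * J' τ₂))
    (hcJ : ∀ (ν τ₁ τ₂ : I →₀ ℤ) (w : FreeMonoid I),
      cJ ν (K' τ₁ * wordProd F w * J' τ₂)
        = (extZ ξg τ₁ ν * extZ ξg (nz (wt w)) ν) • (K' τ₁ * wordProd F w * J' τ₂))
    {iS : I → (A →ₗ[𝔽] A)}
    (hiS0 : ∀ (j : I) (τ₁ τ₂ : I →₀ ℤ), iS j (K' τ₁ * J' τ₂) = 0)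
    (hiSF : ∀ j i : I, iS j (F i) = if i = j then ξg i j • (1 : A) else 0)
    (hiSmul : ∀ (j : I) (x y : A), iS j (x * y) = iS j x * cJ (δZ j) y + cK (δZ j) x * iS j y)
    {ιm : FA 𝔽 I →ₗ[𝔽] A} (hιm1 : ιm 1 = 1) (hιmanti : ∀ x y : FA 𝔽 I, ιm (x * y) = ιm y * ιm x)
    (hιmθ : ∀ i, ιm (θ 𝔽 i) = F i)
    {ri : I → (FA 𝔽 I →ₗ[𝔽] FA 𝔽 I)} (hri1 : ∀ i, ri i 1 = 0)
    (hriθ : ∀ i j : I, ri i (θ 𝔽 j) = if i = j then 1 else 0)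
    (hrim : ∀ (i : I) (ν μ : I →₀ ℕ) (x y : FA 𝔽 I), IsHomog ν x → IsHomog μ y →
      ri i (x * y)
        = (v ^ (-(cd.dotN (δN i) μ)) * extZ βg (δZ i) (nz μ)) • (ri i x * y) + x * ri i y)
    (j : I) (w : FreeMonoid I) :
    iS j (ιm (MonoidAlgebra.single w 1))
      = extZ ξg (nz (wt w)) (δZ j) • ιm (ri j (MonoidAlgebra.single w 1)) := by
  have hK : ∀ u, cK (δZ j) (ιm (MonoidAlgebra.single u 1))
      = ang cd v βg ξg (δZ j) (nz (wt u)) • ιm (MonoidAlgebra.single u 1) := fun u => by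
    simpa only [← map_single_eq_wordProd_reverse ιm F hιm1 hιmanti hιmθ, wt_reverse,
      ang_zero_right, one_mul] using apply_wordProd_of_apply_KwJ hK'0 hJ'0 (hcK (δZ j)) u.reverse
  have hJ : ∀ a, cJ (δZ j) (F a) = ξg a j • F a := fun a => by
    simpa only [extZ_zero_left, one_mul, wt_of, nz_δN, extZ_single_single, wordProd_of] using
      apply_wordProd_of_apply_KwJ hK'0 hJ'0 (hcJ (δZ j)) (FreeMonoid.of a)
  have hS1 : iS j 1 = 0 := by simpa only [hK'0, hJ'0, mul_one] using hiS0 j 0 0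
  induction w using FreeMonoid.recOn with
  | one => rw [← MonoidAlgebra.one_def, hιm1, hS1, hri1, map_zero, smul_zero]
  | of_mul a t ih =>
    rw [single_of_mul, hrim j _ _ _ _ (isHomog_θ a) (isHomog_single t), hriθ, hιmanti, hiSmul,
      ih, hιmθ, hJ, hiSF, hK, ang_δZ_nz hv, wt_mul, wt_of, nz_add, nz_δN, extZ_add_left hξne,
      extZ_single_single]
    obtain rfl | h := eq_or_ne a j
    · simp only [if_true, one_mul, map_add, map_smul, hιmanti, hιmθ, smul_mul_assoc, mul_smul_comm,
        mul_one]
      module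
    · simp only [if_neg h, if_neg h.symm, zero_mul, mul_zero, smul_zero, add_zero, zero_add,
        hιmanti, hιmθ, smul_mul_assoc, mul_smul_comm]
      module

theorem Sj_ιp_single_eq_ιp_ir {cd : CartanDatum I} {v : 𝔽} {βg ξg : I → I → 𝔽}
    (hξne : ∀ i j, ξg i j ≠ 0)
    {E : I → A} {K Jp : (I →₀ ℤ) → A} (hK0 : K 0 = 1) (hJ0 : Jp 0 = 1)
    {cK' : (I →₀ ℤ) → (A →ₗ[𝔽] A)}
    (hcK' : ∀ (ν τ₁ τ₂ : I →₀ ℤ) (w : FreeMonoid I),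
      cK' ν (K τ₁ * wordProd E w * Jp τ₂)
        = (ang cd v βg ξg τ₁ ν * ang cd v βg ξg (nz (wt w)) ν
            * (extZ ξg ν (nz (wt w)))⁻¹ * extZ ξg ν τ₂) • (K τ₁ * wordProd E w * Jp τ₂))
    {Sj : I → (A →ₗ[𝔽] A)}
    (hSj0 : ∀ (j : I) (τ₁ τ₂ : I →₀ ℤ), Sj j (K τ₁ * Jp τ₂) = 0)
    (hSjE : ∀ j i : I, Sj j (E i) = if i = j then 1 else 0)
    (hSjmul : ∀ (j : I) (x y : A), Sj j (x * y) = Sj j x * y + cK' (δZ j) x * Sj j y)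
    {ιp : FA 𝔽 I →ₐ[𝔽] A} (hιp : ∀ i, ιp (θ 𝔽 i) = E i)
    {ir : I → (FA 𝔽 I →ₗ[𝔽] FA 𝔽 I)} (hir1 : ∀ i, ir i 1 = 0)
    (hirθ : ∀ i j : I, ir i (θ 𝔽 j) = if i = j then 1 else 0)
    (hirm : ∀ (i : I) (ν μ : I →₀ ℕ) (x y : FA 𝔽 I), IsHomog ν x → IsHomog μ y →
      ir i (x * y)
        = ir i x * y + (v ^ (-(cd.dotN (δN i) ν)) * extZ βg (nz ν) (δZ i)) • (x * ir i y))
    (j : I) (w : FreeMonoid I) :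
    Sj j (ιp (MonoidAlgebra.single w 1)) = ιp (ir j (MonoidAlgebra.single w 1)) := by
  have hK : ∀ a, cK' (δZ j) (E a) = (v ^ (-cd.c a j) * βg a j) • E a := fun a => by
    simpa only [ang_zero_left, extZ_zero_right, one_mul, mul_one, wt_of, nz_δN, wordProd_of,
      ang_δZ_δZ, extZ_single_single, mul_inv_cancel_right₀ (hξne j a)] using
      apply_wordProd_of_apply_KwJ hK0 hJ0 (hcK' (δZ j)) (FreeMonoid.of a)
  have hS1 : Sj j 1 = 0 := by simpa only [hK0, hJ0, mul_one] using hSj0 j 0 0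
  induction w using FreeMonoid.recOn with
  | one => rw [← MonoidAlgebra.one_def, map_one, hS1, hir1, map_zero]
  | of_mul a t ih =>
    rw [single_of_mul, hirm j _ _ _ _ (isHomog_θ a) (isHomog_single t), hirθ, map_mul, hιp,
      hSjmul, hSjE, hK, ih, cd.dotN_δN_δN, cd.symm, nz_δN, extZ_single_single]
    obtain rfl | h := eq_or_ne a j
    · simp only [if_true, one_mul, map_add, map_smul, map_mul, hιp, smul_mul_assoc]
    · simp only [if_neg h, if_neg h.symm, zero_mul, zero_add, map_smul, map_mul, hιp,
        smul_mul_assoc]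

end Intertwining

theorem iota_intertwines_S_and_r_general
    {I : Type} [DecidableEq I] (cd : CartanDatum I)
    {𝔽 : Type} [Field 𝔽] [CharZero 𝔽] (v : 𝔽) (hv : Transcendental ℚ v)
    (βg ξg : I → I → 𝔽)
    (hξne : ∀ i j, ξg i j ≠ 0)
    {Ap : Type} [Ring Ap] [Algebra 𝔽 Ap]
    (E : I → Ap) (K Jp : (I →₀ ℤ) → Ap)
    (hK0 : K 0 = 1)
    (hJ0 : Jp 0 = 1)
    {Am : Type} [Ring Am] [Algebra 𝔽 Am]
    (F : I → Am) (K' J' : (I →₀ ℤ) → Am)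
    (hK'0 : K' 0 = 1)
    (hJ'0 : J' 0 = 1)
    (cK cJ : (I →₀ ℤ) → (Am →ₗ[𝔽] Am))
    (hcK : ∀ (ν τ₁ τ₂ : I →₀ ℤ) (w : FreeMonoid I),
      cK ν (K' τ₁ * wordProd F w * J' τ₂)
        = (ang cd v βg ξg ν τ₁ * ang cd v βg ξg ν (nz (wt w))) • (K' τ₁ * wordProd F w * J' τ₂))
    (hcJ : ∀ (ν τ₁ τ₂ : I →₀ ℤ) (w : FreeMonoid I),
      cJ ν (K' τ₁ * wordProd F w * J' τ₂)
        = (extZ ξg τ₁ ν * extZ ξg (nz (wt w)) ν) • (K' τ₁ * wordProd F w * J' τ₂))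
    (iS : I → (Am →ₗ[𝔽] Am))
    (hiS0 : ∀ (j : I) (τ₁ τ₂ : I →₀ ℤ), iS j (K' τ₁ * J' τ₂) = 0)
    (hiSF : ∀ j i : I, iS j (F i) = if i = j then ξg i j • (1 : Am) else 0)
    (hiSmul : ∀ (j : I) (x y : Am), iS j (x * y) = iS j x * cJ (δZ j) y + cK (δZ j) x * iS j y)
    (cK' : (I →₀ ℤ) → (Ap →ₗ[𝔽] Ap))
    (hcK' : ∀ (ν τ₁ τ₂ : I →₀ ℤ) (w : FreeMonoid I),
      cK' ν (K τ₁ * wordProd E w * Jp τ₂)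
        = (ang cd v βg ξg τ₁ ν * ang cd v βg ξg (nz (wt w)) ν
            * (extZ ξg ν (nz (wt w)))⁻¹ * extZ ξg ν τ₂) • (K τ₁ * wordProd E w * Jp τ₂))
    (Sj : I → (Ap →ₗ[𝔽] Ap))
    (hSj0 : ∀ (j : I) (τ₁ τ₂ : I →₀ ℤ), Sj j (K τ₁ * Jp τ₂) = 0)
    (hSjE : ∀ j i : I, Sj j (E i) = if i = j then 1 else 0)
    (hSjmul : ∀ (j : I) (x y : Ap), Sj j (x * y) = Sj j x * y + cK' (δZ j) x * Sj j y)
    (ιp : FA 𝔽 I →ₐ[𝔽] Ap) (hιp : ∀ i, ιp (θ 𝔽 i) = E i)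
    (ιm : FA 𝔽 I →ₗ[𝔽] Am) (hιm1 : ιm 1 = 1)
    (hιmanti : ∀ x y : FA 𝔽 I, ιm (x * y) = ιm y * ιm x)
    (hιmθ : ∀ i, ιm (θ 𝔽 i) = F i)
    (ri : I → (FA 𝔽 I →ₗ[𝔽] FA 𝔽 I))
    (hri1 : ∀ i, ri i 1 = 0)
    (hriθ : ∀ i j : I, ri i (θ 𝔽 j) = if i = j then 1 else 0)
    (hrim : ∀ (i : I) (ν μ : I →₀ ℕ) (x y : FA 𝔽 I), IsHomog ν x → IsHomog μ y →
      ri i (x * y)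
        = (v ^ (-(cd.dotN (δN i) μ)) * extZ βg (δZ i) (nz μ)) • (ri i x * y) + x * ri i y)
    (ir : I → (FA 𝔽 I →ₗ[𝔽] FA 𝔽 I))
    (hir1 : ∀ i, ir i 1 = 0)
    (hirθ : ∀ i j : I, ir i (θ 𝔽 j) = if i = j then 1 else 0)
    (hirm : ∀ (i : I) (ν μ : I →₀ ℕ) (x y : FA 𝔽 I), IsHomog ν x → IsHomog μ y →
      ir i (x * y)
        = ir i x * y + (v ^ (-(cd.dotN (δN i) ν)) * extZ βg (nz ν) (δZ i)) • (x * ir i y))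
    :
    ∀ (i : I) (ν : I →₀ ℕ) (x : FA 𝔽 I), IsHomog ν x →
      iS i (ιm x) = extZ ξg (nz ν) (δZ i) • ιm (ri i x) ∧
      Sj i (ιp x) = ιp (ir i x) := by
  intro i ν x hx
  have hv0 : v ≠ 0 := fun h => hv (h ▸ isAlgebraic_zero)
  refine ⟨hx.linearMap_ext (iS i ∘ₗ ιm) (extZ ξg (nz ν) (δZ i) • (ιm ∘ₗ ri i)) fun w hw => ?_,
    hx.linearMap_ext (Sj i ∘ₗ ιp.toLinearMap) (ιp.toLinearMap ∘ₗ ir i) fun w _ => ?_⟩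
  · rw [← hw]
    exact iS_ιm_single_eq_smul_ιm_ri hv0 hξne hK'0 hJ'0 hcK hcJ hiS0 hiSF hiSmul hιm1 hιmanti
      hιmθ hri1 hriθ hrim i w
  · exact Sj_ιp_single_eq_ιp_ir hξne hK0 hJ0 hcK' hSj0 hSjE hSjmul hιp hir1 hirθ hirm i w

theorem iota_intertwines_S_and_r
    {I : Type} [Fintype I] [DecidableEq I] (cd : CartanDatum I)
    {𝔽 : Type} [Field 𝔽] [CharZero 𝔽] (v : 𝔽) (hv : Transcendental ℚ v)
    (βg ξg : I → I → 𝔽)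
    (hββ : ∀ i j, βg i j * βg j i = 1) (hβii : ∀ i, βg i i = 1)
    (hξsymm : ∀ i j, ξg i j = ξg j i) (hξne : ∀ i j, ξg i j ≠ 0)
    {Ap : Type} [Ring Ap] [Algebra 𝔽 Ap]
    (E : I → Ap) (K Jp : (I →₀ ℤ) → Ap)
    (hK0 : K 0 = 1) (hKadd : ∀ a b, K (a + b) = K a * K b)
    (hJ0 : Jp 0 = 1) (hJadd : ∀ a b, Jp (a + b) = Jp a * Jp b)
    (hKJ : ∀ a b, K a * Jp b = Jp b * K a)
    (hKE : ∀ i j : I, K (δZ i) * E j = ang cd v βg ξg (δZ i) (δZ j) • (E j * K (δZ i)))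
    (hJE : ∀ i j : I, Jp (δZ i) * E j = ξg j i • (E j * Jp (δZ i)))
    (bp : Module.Basis ((I →₀ ℤ) × FreeMonoid I × (I →₀ ℤ)) 𝔽 Ap)
    (hbp : ∀ p, bp p = K p.1 * wordProd E p.2.1 * Jp p.2.2)
    {Am : Type} [Ring Am] [Algebra 𝔽 Am]
    (F : I → Am) (K' J' : (I →₀ ℤ) → Am)
    (hK'0 : K' 0 = 1) (hK'add : ∀ a b, K' (a + b) = K' a * K' b)
    (hJ'0 : J' 0 = 1) (hJ'add : ∀ a b, J' (a + b) = J' a * J' b)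
    (hK'J' : ∀ a b, K' a * J' b = J' b * K' a)
    (hK'F : ∀ i j : I, K' (δZ i) * F j
      = (ang cd v βg ξg (δZ j) (δZ i) * (ξg i j)⁻¹) • (F j * K' (δZ i)))
    (hJ'F : ∀ i j : I, J' (δZ i) * F j = F j * J' (δZ i))
    (bm : Module.Basis ((I →₀ ℤ) × FreeMonoid I × (I →₀ ℤ)) 𝔽 Am)
    (hbm : ∀ p, bm p = K' p.1 * wordProd F p.2.1 * J' p.2.2)
    (cK cJ : (I →₀ ℤ) → (Am →ₗ[𝔽] Am))
    (hcK : ∀ (ν τ₁ τ₂ : I →₀ ℤ) (w : FreeMonoid I),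
      cK ν (K' τ₁ * wordProd F w * J' τ₂)
        = (ang cd v βg ξg ν τ₁ * ang cd v βg ξg ν (nz (wt w))) • (K' τ₁ * wordProd F w * J' τ₂))
    (hcJ : ∀ (ν τ₁ τ₂ : I →₀ ℤ) (w : FreeMonoid I),
      cJ ν (K' τ₁ * wordProd F w * J' τ₂)
        = (extZ ξg τ₁ ν * extZ ξg (nz (wt w)) ν) • (K' τ₁ * wordProd F w * J' τ₂))
    (iS : I → (Am →ₗ[𝔽] Am))
    (hiS0 : ∀ (j : I) (τ₁ τ₂ : I →₀ ℤ), iS j (K' τ₁ * J' τ₂) = 0)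
    (hiSF : ∀ j i : I, iS j (F i) = if i = j then ξg i j • (1 : Am) else 0)
    (hiSmul : ∀ (j : I) (x y : Am), iS j (x * y) = iS j x * cJ (δZ j) y + cK (δZ j) x * iS j y)
    (cK' cJ' : (I →₀ ℤ) → (Ap →ₗ[𝔽] Ap))
    (hcK' : ∀ (ν τ₁ τ₂ : I →₀ ℤ) (w : FreeMonoid I),
      cK' ν (K τ₁ * wordProd E w * Jp τ₂)
        = (ang cd v βg ξg τ₁ ν * ang cd v βg ξg (nz (wt w)) ν
            * (extZ ξg ν (nz (wt w)))⁻¹ * extZ ξg ν τ₂) • (K τ₁ * wordProd E w * Jp τ₂))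
    (hcJ' : ∀ (ν τ₁ τ₂ : I →₀ ℤ) (w : FreeMonoid I),
      cJ' ν (K τ₁ * wordProd E w * Jp τ₂) = K τ₁ * wordProd E w * Jp τ₂)
    (Sj : I → (Ap →ₗ[𝔽] Ap))
    (hSj0 : ∀ (j : I) (τ₁ τ₂ : I →₀ ℤ), Sj j (K τ₁ * Jp τ₂) = 0)
    (hSjE : ∀ j i : I, Sj j (E i) = if i = j then 1 else 0)
    (hSjmul : ∀ (j : I) (x y : Ap), Sj j (x * y) = Sj j x * y + cK' (δZ j) x * Sj j y)
    (ιp : FA 𝔽 I →ₐ[𝔽] Ap) (hιp : ∀ i, ιp (θ 𝔽 i) = E i)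
    (ιm : FA 𝔽 I →ₗ[𝔽] Am) (hιm1 : ιm 1 = 1)
    (hιmanti : ∀ x y : FA 𝔽 I, ιm (x * y) = ιm y * ιm x)
    (hιmθ : ∀ i, ιm (θ 𝔽 i) = F i)
    (ri : I → (FA 𝔽 I →ₗ[𝔽] FA 𝔽 I))
    (hri1 : ∀ i, ri i 1 = 0)
    (hriθ : ∀ i j : I, ri i (θ 𝔽 j) = if i = j then 1 else 0)
    (hrim : ∀ (i : I) (ν μ : I →₀ ℕ) (x y : FA 𝔽 I), IsHomog ν x → IsHomog μ y →
      ri i (x * y)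
        = (v ^ (-(cd.dotN (δN i) μ)) * extZ βg (δZ i) (nz μ)) • (ri i x * y) + x * ri i y)
    (ir : I → (FA 𝔽 I →ₗ[𝔽] FA 𝔽 I))
    (hir1 : ∀ i, ir i 1 = 0)
    (hirθ : ∀ i j : I, ir i (θ 𝔽 j) = if i = j then 1 else 0)
    (hirm : ∀ (i : I) (ν μ : I →₀ ℕ) (x y : FA 𝔽 I), IsHomog ν x → IsHomog μ y →
      ir i (x * y)
        = ir i x * y + (v ^ (-(cd.dotN (δN i) ν)) * extZ βg (nz ν) (δZ i)) • (x * ir i y))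
    :
    ∀ (i : I) (ν : I →₀ ℕ) (x : FA 𝔽 I), IsHomog ν x →
      iS i (ιm x) = extZ ξg (nz ν) (δZ i) • ιm (ri i x) ∧
      Sj i (ιp x) = ιp (ir i x) :=
  iota_intertwines_S_and_r_general cd v hv βg ξg hξne E K Jp hK0 hJ0 F K' J' hK'0 hJ'0 cK cJ hcK hcJ
    iS hiS0 hiSF hiSmul cK' hcK' Sj hSj0 hSjE hSjmul ιp hιp ιm hιm1 hιmanti hιmθ ri hri1 hriθ hrim
    ir hir1 hirθ hirm
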